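/- arXiv:1204.2693 — 2 statements merged into one kernel-verified Lean document; each statement's English description precedes it below -/
import Mathlib

section
/- For every n ≥ 3, there exists an (S_1×S_{n-1})-equivariant acyclic matching on the poset of nonempty finite chains of Π̄_n ordered by inclusion (the face poset of the nerve of Π̄_n) whose set of critical elements is exactly C_n ∪ {α_n}, where α_n is the one-element chain { {{1},{2,…,n}} }. -/
/-- The poset `Π̄_n`: set partitions of `Fin n` (modeled as setoids, ordered by refinement,
with the finer partition smaller), with the minimum `⊥` and maximum `⊤` removed. -/
def BarPi (n : ℕ) : Type :=
  {s : Setoid (Fin n) // s ≠ ⊥ ∧ s ≠ ⊤}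

instance (n : ℕ) : PartialOrder (BarPi n) :=
  inferInstanceAs (PartialOrder {s : Setoid (Fin n) // s ≠ ⊥ ∧ s ≠ ⊤})

/-- The natural (relabeling) action of the symmetric group on setoids of `Fin n`. -/
instance permSetoidAction (n : ℕ) : MulAction (Equiv.Perm (Fin n)) (Setoid (Fin n)) where
  smul g s := Setoid.comap (⇑g⁻¹) s
  one_smul s := Setoid.ext fun x y => Iff.rfl
  mul_smul g h s := Setoid.ext fun x y => Iff.rfl

theorem perm_smul_setoid_rel (n : ℕ) (g : Equiv.Perm (Fin n)) (s : Setoid (Fin n))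
    (x y : Fin n) : (g • s) x y ↔ s (g⁻¹ x) (g⁻¹ y) := Iff.rfl

theorem perm_smul_bot (n : ℕ) (g : Equiv.Perm (Fin n)) :
    g • (⊥ : Setoid (Fin n)) = ⊥ := by
  apply Setoid.ext
  intro x y
  rw [perm_smul_setoid_rel]
  constructor
  · intro h
    have : (⊥ : Setoid (Fin n)) (g⁻¹ x) (g⁻¹ y) := h
    rw [show ⇑(⊥ : Setoid (Fin n)) = (· = ·) from Setoid.bot_def] at this
    have := congrArg g this
    simpa using this
  · intro h
    have : x = y := by rwa [show ⇑(⊥ : Setoid (Fin n)) = (· = ·) from Setoid.bot_def] at h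
    subst this
    exact (⊥ : Setoid (Fin n)).iseqv.refl _

theorem perm_smul_top (n : ℕ) (g : Equiv.Perm (Fin n)) :
    g • (⊤ : Setoid (Fin n)) = ⊤ := by
  apply Setoid.ext
  intro x y
  rw [perm_smul_setoid_rel]

theorem perm_smul_mono (n : ℕ) (g : Equiv.Perm (Fin n)) :
    Monotone (fun s : Setoid (Fin n) => g • s) := by
  intro s t h
  intro x y hxy
  exact Setoid.le_def.mp h hxy

/-- The relabeling action of the symmetric group on `Π̄_n`. -/
instance permBarPiAction (n : ℕ) : MulAction (Equiv.Perm (Fin n)) (BarPi n) where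
  smul g s := ⟨g • s.1, by
      constructor
      · intro h
        apply s.2.1
        have := congrArg (fun t => g⁻¹ • t) h
        simpa [perm_smul_bot] using this
      · intro h
        apply s.2.2
        have := congrArg (fun t => g⁻¹ • t) h
        simpa [perm_smul_top] using this⟩
  one_smul s := Subtype.ext (one_smul _ _)
  mul_smul g h s := Subtype.ext (mul_smul g h s.1)

theorem perm_smul_barPi_mono (n : ℕ) (g : Equiv.Perm (Fin n)) :
    Monotone (fun s : BarPi n => g • s) := by
  intro s t h
  exact perm_smul_mono n g h

/-- The subgroup `S_1 × S_{n-1}` of permutations fixing the distinguished element `0`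
(playing the role of `1 ∈ [n]`). -/
def S1Sn (n : ℕ) [NeZero n] : Subgroup (Equiv.Perm (Fin n)) :=
  MulAction.stabilizer (Equiv.Perm (Fin n)) (0 : Fin n)

/-- The set of partitions in `Π̄_n` in which every block not containing the distinguished
element `0` is a singleton. -/
def blockSet (n : ℕ) [NeZero n] : Set (BarPi n) :=
  {s | ∀ x y : Fin n, s.1 x y → s.1 x 0 ∨ x = y}

/-- The face poset of the nerve of `Π̄_n`: nonempty finite chains in `Π̄_n`, ordered
by inclusion. -/
def FacePoset (n : ℕ) : Type :=
  {c : Finset (BarPi n) // c.Nonempty ∧ IsChain (· ≤ ·) (↑c : Set (BarPi n))}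

instance (n : ℕ) : PartialOrder (FacePoset n) where
  le c d := c.1 ⊆ d.1
  le_refl c := subset_rfl
  le_trans a b c hab hbc := Finset.Subset.trans hab hbc
  le_antisymm a b hab hba := Subtype.ext (Finset.Subset.antisymm hab hba)

noncomputable instance (n : ℕ) : DecidableEq (BarPi n) := Classical.decEq _

/-- The relabeling action of the symmetric group on the face poset. -/
noncomputable instance permFaceAction (n : ℕ) : MulAction (Equiv.Perm (Fin n)) (FacePoset n) where
  smul g c := ⟨c.1.image (fun s => g • s), by
    constructor
    · exact c.2.1.image _
    · intro x hx y hy hxy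
      simp only [Finset.coe_image, Set.mem_image, Finset.mem_coe] at hx hy
      obtain ⟨x', hx', rfl⟩ := hx
      obtain ⟨y', hy', rfl⟩ := hy
      have hxy' : x' ≠ y' := fun h => hxy (by rw [h])
      rcases c.2.2 hx' hy' hxy' with h | h
      · exact Or.inl (perm_smul_barPi_mono n g h)
      · exact Or.inr (perm_smul_barPi_mono n g h)⟩
  one_smul c := by
    apply Subtype.ext
    show c.1.image (fun s => (1 : Equiv.Perm (Fin n)) • s) = c.1
    rw [show (fun s : BarPi n => (1 : Equiv.Perm (Fin n)) • s) = id from funext fun s => one_smul _ s]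
    exact Finset.image_id
  mul_smul g h c := by
    apply Subtype.ext
    show c.1.image (fun s => (g * h) • s) = (c.1.image (fun s => h • s)).image (fun s => g • s)
    rw [Finset.image_image, show ((fun s : BarPi n => g • s) ∘ (fun s => h • s)) = (fun s => (g * h) • s) from funext fun s => (mul_smul g h s).symm]

/-- `C_n`: the chains of cardinality `n - 2` in `Π̄_n` all of whose members lie in
`blockSet n`, i.e. are partitions in which every block not containing `0` is a singleton. -/
def Cn (n : ℕ) [NeZero n] : Set (FacePoset n) :=
  {c | (↑c.1 : Set (BarPi n)) ⊆ blockSet n ∧ c.1.card = n - 2}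

/-- The partition `{{1}, {2, …, n}}` of `[n]`, i.e. `{{0}, {1, …, n-1}}` of `Fin n`,
as a setoid. -/
def alphaSetoid (n : ℕ) [NeZero n] : Setoid (Fin n) :=
  ⟨fun x y => x = y ∨ (x ≠ 0 ∧ y ≠ 0), by
    constructor
    · intro x; exact Or.inl rfl
    · rintro x y (rfl | ⟨hx, hy⟩)
      · exact Or.inl rfl
      · exact Or.inr ⟨hy, hx⟩
    · rintro x y z (rfl | ⟨hx, hy⟩) (rfl | ⟨hy', hz⟩)
      · exact Or.inl rfl
      · exact Or.inr ⟨hy', hz⟩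
      · exact Or.inr ⟨hx, hy⟩
      · exact Or.inr ⟨hx, hz⟩⟩

/-- The partition `{{1}, {2, …, n}}` as an element of `Π̄_n` (requires `n ≥ 3`). -/
def alphaBar (n : ℕ) [NeZero n] (hn : 3 ≤ n) : BarPi n :=
  ⟨alphaSetoid n, by
    constructor
    · intro h
      have h12 : alphaSetoid n ⟨1, by omega⟩ ⟨2, by omega⟩ :=
        Or.inr ⟨by simp [Fin.ext_iff], by simp [Fin.ext_iff]⟩
      rw [h] at h12
      have : (⟨1, by omega⟩ : Fin n) = ⟨2, by omega⟩ := h12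
      simp [Fin.ext_iff] at this
    · intro h
      have h01 : (⊤ : Setoid (Fin n)) 0 ⟨1, by omega⟩ := trivial
      rw [← h] at h01
      rcases h01 with h01 | ⟨h0, _⟩
      · have : (0 : Fin n) = ⟨1, by omega⟩ := h01
        simp [Fin.ext_iff] at this
      · exact h0 rfl⟩

/-- The one-element chain `α_n = {{{1},{2,…,n}}}` in the face poset. -/
def alphaChain (n : ℕ) [NeZero n] (hn : 3 ≤ n) : FacePoset n :=
  ⟨{alphaBar n hn}, Finset.singleton_nonempty _, by
    simp only [Finset.coe_singleton]
    exact Set.Subsingleton.isChain (Set.subsingleton_singleton)⟩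

section Matchings

variable {P : Type*} [PartialOrder P]

/-- `b` covers `a` within the subposet on the subset `S`. -/
def CovByWithin (S : Set P) (a b : P) : Prop :=
  a ∈ S ∧ b ∈ S ∧ a < b ∧ ∀ c ∈ S, a < c → ¬c < b

/-- A partial matching on the subposet of `P` induced on `S`, regarded as a set of
pairs of elements of `P`: every pair is a covering pair within `S`, and every element
occurs in at most one pair. -/
def IsMatchingOn (S : Set P) (M : Set (P × P)) : Prop :=
  (∀ p ∈ M, CovByWithin S p.1 p.2) ∧
    ∀ p ∈ M, ∀ q ∈ M, (p.1 = q.1 ∨ p.1 = q.2 ∨ p.2 = q.1 ∨ p.2 = q.2) → p = q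

/-- A partial matching on the subposet induced on `S` is acyclic if there is no cycle
`a₁ ⋖ b₁ ⋗ a₂ ⋖ b₂ ⋗ ⋯ ⋗ a_k ⋖ b_k ⋗ a₁` with `k ≥ 2`, all `aᵢ` distinct and
`(aᵢ, bᵢ) ∈ M` (indices mod `k`, covering relations within `S`). -/
def IsAcyclicMatchingOn (S : Set P) (M : Set (P × P)) : Prop :=
  IsMatchingOn S M ∧
    ¬∃ (k : ℕ) (a b : ZMod k → P), 2 ≤ k ∧ Function.Injective a ∧
      ∀ i : ZMod k, (a i, b i) ∈ M ∧ CovByWithin S (a (i + 1)) (b i)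

/-- The critical elements of a matching `M` on the subposet induced on `S`: the elements
of `S` occurring in no pair of `M`. -/
def criticalSet (S : Set P) (M : Set (P × P)) : Set P :=
  {x ∈ S | ∀ p ∈ M, p.1 ≠ x ∧ p.2 ≠ x}

end Matchings

/-!
For a chain `c`, the zero blocks (blocks of the point `0`, which plays the role of `1`) of its
members in `A`, together with `{0}` and `[n]`, form a flag of subsets. Call a step `T ⊂ T'` of
this flag *wide* if `|T' \ T| ≥ 2`. A chain has no wide step iff its flag is complete, which
forces every member into `A` and `|c| = n - 2`: these are exactly the chains of `C_n`.

For a chain with a wide step, let `T ⊂ V` be the topmost one and `ω` the partition with blocks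
`T`, `V \ T` and singletons. Call *high* the members of `c` outside `A` lying between the
single-block partitions of `T` and `V` whose zero block exceeds `T`, and *outer* the members
outside `A` not lying between them. The toggle `τ(c)` is the meet of `ω` with the high members.
It is comparable with every member of `c`, and it neither lies in `A` nor is high, so inserting
or removing it changes neither the flag nor `τ`. Hence pairing `c \ {τ}` with `c ∪ {τ}` is a
matching, natural under relabelings fixing `0`, whose only unmatched chain with a wide step is
`{τ} = α_n`. Along `a ⋖ b ⋗ a'` in a cycle, `a'` is `a` with `τ(a)` added and some `y` removed;
the numbers of members in `A`, of outer members and of high members then decrease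
lexicographically, so there are no cycles.
-/

open Finset
open scoped Pointwise

/-! ### Chains and matchings -/

theorem IsChain.inf_mem {α : Type*} [Lattice α] {s : Set α} (hs : IsChain (· ≤ ·) s) {x y : α}
    (hx : x ∈ s) (hy : y ∈ s) : x ⊓ y ∈ s := by
  rcases hs.total hx hy with h | h
  · rwa [inf_eq_left.2 h]
  · rwa [inf_eq_right.2 h]

theorem IsChain.sup_mem {α : Type*} [Lattice α] {s : Set α} (hs : IsChain (· ≤ ·) s) {x y : α}
    (hx : x ∈ s) (hy : y ∈ s) : x ⊔ y ∈ s := by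
  rcases hs.total hx hy with h | h
  · rwa [sup_eq_right.2 h]
  · rwa [sup_eq_left.2 h]

theorem Finset.inf_id_mem_of_isChain {α : Type*} [Lattice α] [OrderTop α] {s : Finset α}
    (hs : IsChain (· ≤ ·) (s : Set α)) (hne : s.Nonempty) : s.inf id ∈ s := by
  rw [← inf'_eq_inf hne]
  exact inf'_mem _ (fun _ hx _ hy => hs.inf_mem hx hy) _ hne _ fun _ => id

theorem Finset.sup_id_mem_of_isChain {α : Type*} [Lattice α] [OrderBot α] {s : Finset α}
    (hs : IsChain (· ≤ ·) (s : Set α)) (hne : s.Nonempty) : s.sup id ∈ s := by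
  rw [← sup'_eq_sup hne]
  exact sup'_mem _ (fun _ hx _ hy => hs.sup_mem hx hy) _ hne _ fun _ => id

theorem Finset.filter_eq_filter_of_insert_eq {α : Type*} [DecidableEq α] {p : α → Prop}
    [DecidablePred p] {s t : Finset α} {x : α} (hx : ¬p x) (h : insert x s = insert x t) :
    s.filter p = t.filter p := by
  have filter_insert_x : ∀ u : Finset α, (insert x u).filter p = u.filter p := fun u => by
    rw [filter_insert, if_neg hx]
  rw [← filter_insert_x s, h, filter_insert_x]

theorem Finset.filter_insert_erase_of_not {α : Type*} [DecidableEq α] {p : α → Prop}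
    [DecidablePred p] {s : Finset α} {x : α} (hx : ¬p x) (y : α) :
    (insert x (s.erase y)).filter p = (s.filter p).erase y := by
  rw [filter_insert, if_neg hx, filter_erase]

theorem IsMatchingOn.isAcyclicMatchingOn_of_lt {P β : Type*} [PartialOrder P] [LinearOrder β]
    {S : Set P} {M : Set (P × P)} (hM : IsMatchingOn S M) (μ : P → β)
    (hμ : ∀ a b a' b', (a, b) ∈ M → (a', b') ∈ M → a' ≠ a → CovByWithin S a' b → μ a' < μ a) :
    IsAcyclicMatchingOn S M := by
  refine ⟨hM, ?_⟩
  rintro ⟨k, a, b, hk, ha, hcyc⟩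
  have : NeZero k := ⟨by omega⟩
  have : Fact (1 < k) := ⟨hk⟩
  obtain ⟨i, -, hi⟩ := univ.exists_min_image (μ ∘ a) univ_nonempty
  have hne : a (i + 1) ≠ a i := fun h => one_ne_zero (add_eq_left.1 (ha h))
  exact (hμ _ _ _ _ (hcyc i).1 (hcyc (i + 1)).1 hne (hcyc i).2).not_ge (hi _ (mem_univ _))

/-! ### Flags of subsets of a finite type -/

namespace Finset

section Pointwise

variable {α G : Type*} [DecidableEq α] [Group G] [MulAction G α] (g : G)

theorem smul_finset_ssubset_smul_finset_iff {s t : Finset α} : g • s ⊂ g • t ↔ s ⊂ t := by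
  rw [ssubset_def, ssubset_def, smul_finset_subset_smul_finset_iff,
    smul_finset_subset_smul_finset_iff]

theorem filter_smul_finset (s : Finset α) (p : α → Prop) [DecidablePred p] :
    (g • s).filter p = g • s.filter (fun b => p (g • b)) := by
  rw [smul_finset_def, smul_finset_def, filter_image]

theorem sup_id_smul_finset (s : Finset (Finset α)) : (g • s).sup id = g • s.sup id := by
  rw [smul_finset_def, sup_image]
  exact (apply_sup_eq_sup_comp (g • · : Finset α → Finset α) (fun _ _ => smul_finset_union)
    (smul_finset_empty g)).symm

theorem inf_id_smul_finset [Fintype α] (s : Finset (Finset α)) :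
    (g • s).inf id = g • s.inf id := by
  rw [smul_finset_def, inf_image]
  exact (apply_inf_eq_inf_comp (g • · : Finset α → Finset α) (fun _ _ => smul_finset_inter)
    smul_finset_univ).symm

end Pointwise

section CardsOfChains

variable {α : Type*} {F : Finset (Finset α)}

theorem card_image_card_of_isChain (hF : IsChain (· ≤ ·) (F : Set (Finset α))) :
    (F.image card).card = F.card :=
  card_image_of_injOn fun _ hT _ hU h => (hF.total hT hU).elim
    (eq_of_subset_of_card_le · h.ge) fun h' => (eq_of_subset_of_card_le h' h.le).symm

theorem image_card_subset_Icc [Fintype α] {a : α} (hmem : ∀ T ∈ F, a ∈ T) :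
    F.image card ⊆ Icc 1 (Fintype.card α) := by
  intro m hm
  obtain ⟨T, hT, rfl⟩ := mem_image.1 hm
  exact mem_Icc.2 ⟨card_pos.2 ⟨a, hmem T hT⟩, card_le_univ T⟩

end CardsOfChains

section Flags

variable {α : Type*} [Fintype α] [DecidableEq α]

def nextIn (F : Finset (Finset α)) (T : Finset α) : Finset α := {U ∈ F | T ⊂ U}.inf id

def wideSteps (F : Finset (Finset α)) : Finset (Finset α) := {T ∈ F | 1 < (F.nextIn T \ T).card}

def gapBot (F : Finset (Finset α)) : Finset α := F.wideSteps.sup id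

def gapTop (F : Finset (Finset α)) : Finset α := F.nextIn F.gapBot

variable {F : Finset (Finset α)} {T U : Finset α} {a : α}

theorem nextIn_subset (hU : U ∈ F) (h : T ⊂ U) : F.nextIn T ⊆ U :=
  inf_le (f := id) (mem_filter.2 ⟨hU, h⟩)

theorem nextIn_mem (hF : IsChain (· ≤ ·) (F : Set (Finset α))) (hu : univ ∈ F) (hT : T ≠ univ) :
    F.nextIn T ∈ F ∧ T ⊂ F.nextIn T :=
  mem_filter.1 <| inf_id_mem_of_isChain (hF.mono (coe_subset.2 (filter_subset _ _)))
    ⟨univ, mem_filter.2 ⟨hu, ssubset_univ_iff.2 hT⟩⟩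

theorem ne_univ_of_mem_wideSteps (h : T ∈ F.wideSteps) : T ≠ univ := by
  rintro rfl
  have := (mem_filter.1 h).2
  rw [sdiff_eq_empty_iff_subset.2 (subset_univ _), card_empty] at this
  omega

theorem gapBot_mem (hF : IsChain (· ≤ ·) (F : Set (Finset α))) (h : F.wideSteps.Nonempty) :
    F.gapBot ∈ F.wideSteps :=
  sup_id_mem_of_isChain (hF.mono (coe_subset.2 (filter_subset _ _))) h

theorem one_lt_card_gapTop_sdiff (hF : IsChain (· ≤ ·) (F : Set (Finset α)))
    (h : F.wideSteps.Nonempty) : 1 < (F.gapTop \ F.gapBot).card :=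
  (mem_filter.1 (gapBot_mem hF h)).2

theorem gapTop_mem (hF : IsChain (· ≤ ·) (F : Set (Finset α))) (hu : univ ∈ F)
    (h : F.wideSteps.Nonempty) : F.gapTop ∈ F ∧ F.gapBot ⊂ F.gapTop :=
  nextIn_mem hF hu (ne_univ_of_mem_wideSteps (gapBot_mem hF h))

theorem subset_gapBot_or_gapTop_subset (hF : IsChain (· ≤ ·) (F : Set (Finset α)))
    (h : F.wideSteps.Nonempty) (hT : T ∈ F) : T ⊆ F.gapBot ∨ F.gapTop ⊆ T := by
  rcases hF.total hT (mem_filter.1 (gapBot_mem hF h)).1 with h' | h'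
  · exact Or.inl h'
  · rcases h'.eq_or_ssubset with h'' | h''
    exacts [Or.inl h''.ge, Or.inr (nextIn_subset hT h'')]

theorem card_nextIn_of_not_mem_wideSteps (hF : IsChain (· ≤ ·) (F : Set (Finset α)))
    (hu : univ ∈ F) (hT : T ∈ F) (hTu : T ≠ univ) (hw : T ∉ F.wideSteps) :
    (F.nextIn T).card = T.card + 1 := by
  obtain ⟨-, hlt⟩ := nextIn_mem hF hu hTu
  have h1 : (F.nextIn T \ T).card ≤ 1 := by simpa [wideSteps, hT] using hw
  have h2 := card_sdiff_of_subset hlt.subset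
  have h3 := card_lt_card hlt
  omega

theorem wideSteps_eq_empty_of_image_card_eq (hF : IsChain (· ≤ ·) (F : Set (Finset α)))
    (hu : univ ∈ F) (hfull : F.image card = Icc 1 (Fintype.card α)) : F.wideSteps = ∅ := by
  refine eq_empty_of_forall_notMem fun T hT => ?_
  have hTu := ne_univ_of_mem_wideSteps hT
  obtain ⟨hTF, hwide⟩ := mem_filter.1 hT
  have hTcard := card_lt_card (ssubset_univ_iff.2 hTu)
  obtain ⟨W, hW, hWcard⟩ := mem_image.1 (hfull ▸ mem_Icc.2 ⟨by omega, by simpa using hTcard⟩ :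
    T.card + 1 ∈ F.image card)
  have hTW : T ⊂ W := (hF.total hTF hW).elim
    (fun h => h.ssubset_of_ne (by rintro rfl; omega))
    (fun h => absurd (card_le_card h) (by omega))
  have := card_le_card (nextIn_subset hW hTW)
  have := card_sdiff_of_subset (nextIn_mem hF hu hTu).2.subset
  omega

theorem Icc_subset_image_card_of_wideSteps_eq_empty (hF : IsChain (· ≤ ·) (F : Set (Finset α)))
    (hu : univ ∈ F) (ha : {a} ∈ F) (h : F.wideSteps = ∅) :
    Icc 1 (Fintype.card α) ⊆ F.image card := by
  intro m hm
  rw [mem_Icc] at hm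
  obtain ⟨h1, hm⟩ := hm
  induction m, h1 using Nat.le_induction with
  | base => exact mem_image.2 ⟨{a}, ha, card_singleton a⟩
  | succ m hm1 ih =>
    obtain ⟨T, hT, rfl⟩ := mem_image.1 (ih (by omega))
    have hTu : T ≠ univ := fun h => by rw [h, card_univ] at hm; omega
    exact mem_image.2 ⟨_, (nextIn_mem hF hu hTu).1,
      card_nextIn_of_not_mem_wideSteps hF hu hT hTu (by simp [h])⟩

theorem card_eq_iff_wideSteps_eq_empty (hF : IsChain (· ≤ ·) (F : Set (Finset α)))
    (hu : univ ∈ F) (ha : {a} ∈ F) (hmem : ∀ T ∈ F, a ∈ T) :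
    F.card = Fintype.card α ↔ F.wideSteps = ∅ := by
  rw [← card_image_card_of_isChain hF]
  refine ⟨fun h => wideSteps_eq_empty_of_image_card_eq hF hu
    (eq_of_subset_of_card_le (image_card_subset_Icc hmem) (by simp [h])), fun h => ?_⟩
  rw [(image_card_subset_Icc hmem).antisymm
    (Icc_subset_image_card_of_wideSteps_eq_empty hF hu ha h), Nat.card_Icc, Nat.add_sub_cancel]

variable (a)

theorem nextIn_pair (h : 2 ≤ Fintype.card α) :
    nextIn ({{a}, univ} : Finset (Finset α)) {a} = univ := by
  have hne : ({a} : Finset α) ≠ univ := fun he => by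
    have := congrArg card he
    rw [card_singleton, card_univ] at this
    omega
  rw [nextIn, filter_insert, if_neg (lt_irrefl _), filter_singleton,
    if_pos (ssubset_univ_iff.2 hne), inf_singleton, id]

theorem wideSteps_pair (h : 3 ≤ Fintype.card α) :
    wideSteps ({{a}, univ} : Finset (Finset α)) = {{a}} := by
  ext T
  simp only [wideSteps, mem_filter, mem_insert, mem_singleton]
  constructor
  · rintro ⟨rfl | rfl, hT⟩
    · rfl
    · simp [sdiff_eq_empty_iff_subset.2 (subset_univ _)] at hT
  · rintro rfl
    refine ⟨Or.inl rfl, ?_⟩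
    rw [nextIn_pair a (by omega), ← compl_eq_univ_sdiff, card_compl, card_singleton]
    omega

theorem gapBot_pair (h : 3 ≤ Fintype.card α) :
    gapBot ({{a}, univ} : Finset (Finset α)) = {a} := by
  rw [gapBot, wideSteps_pair a h, sup_singleton, id]

theorem gapTop_pair (h : 3 ≤ Fintype.card α) :
    gapTop ({{a}, univ} : Finset (Finset α)) = univ := by
  rw [gapTop, gapBot_pair a h, nextIn_pair a (by omega)]

section Equivariance

variable {G : Type*} [Group G] [MulAction G α] (g : G) (F : Finset (Finset α))

theorem nextIn_smul (T : Finset α) : (g • F).nextIn (g • T) = g • F.nextIn T := by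
  simp only [nextIn, filter_smul_finset, smul_finset_ssubset_smul_finset_iff, inf_id_smul_finset]

theorem wideSteps_smul : (g • F).wideSteps = g • F.wideSteps := by
  simp only [wideSteps, filter_smul_finset, nextIn_smul, ← smul_finset_sdiff, card_smul_finset]

theorem gapBot_smul : (g • F).gapBot = g • F.gapBot := by
  rw [gapBot, gapBot, wideSteps_smul, sup_id_smul_finset]

theorem gapTop_smul : (g • F).gapTop = g • F.gapTop := by
  rw [gapTop, gapTop, gapBot_smul, nextIn_smul]

end Equivariance

end Flags

end Finset

/-! ### Partitions with prescribed blocks -/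

namespace Setoid

variable {α : Type*}

def block (T : Finset α) : Setoid α where
  r x y := x = y ∨ x ∈ T ∧ y ∈ T
  iseqv := ⟨fun _ => Or.inl rfl, by rintro x y (rfl | h) <;> tauto,
    by rintro x y z (rfl | h) (rfl | h') <;> tauto⟩

def twoBlocks [DecidableEq α] (T V : Finset α) : Setoid α where
  r x y := x = y ∨ x ∈ T ∧ y ∈ T ∨ x ∈ V \ T ∧ y ∈ V \ T
  iseqv := ⟨fun _ => Or.inl rfl, by rintro x y (rfl | h) <;> tauto, by
    rintro x y z (rfl | h) (rfl | h') <;> simp only [mem_sdiff] at * <;> tauto⟩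

variable {T U V : Finset α} {s : Setoid α} {x y : α}

theorem block_rel : block T x y ↔ x = y ∨ x ∈ T ∧ y ∈ T := Iff.rfl

theorem twoBlocks_rel [DecidableEq α] :
    twoBlocks T V x y ↔ x = y ∨ x ∈ T ∧ y ∈ T ∨ x ∈ V \ T ∧ y ∈ V \ T := Iff.rfl

theorem block_le_iff : block T ≤ s ↔ ∀ x ∈ T, ∀ y ∈ T, s x y := by
  refine ⟨fun h x hx y hy => h (Or.inr ⟨hx, hy⟩), fun h x y => ?_⟩
  rintro (rfl | ⟨hx, hy⟩)
  exacts [s.refl x, h x hx y hy]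

theorem rel_mem_of_le_block (h : s ≤ block T) (hxy : s x y) (hne : x ≠ y) : x ∈ T ∧ y ∈ T :=
  (h hxy).resolve_left hne

theorem block_mono (h : T ⊆ U) : block T ≤ block U :=
  block_le_iff.2 fun _ hx _ hy => Or.inr ⟨h hx, h hy⟩

theorem block_singleton (a : α) : block {a} = ⊥ :=
  le_bot_iff.1 <| block_le_iff.2 fun _ hx _ hy => by
    rw [mem_singleton.1 hx, mem_singleton.1 hy]

theorem block_univ [Fintype α] : block (univ : Finset α) = ⊤ :=
  top_le_iff.1 fun x y _ => Or.inr ⟨mem_univ x, mem_univ y⟩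

theorem block_le_twoBlocks [DecidableEq α] : block T ≤ twoBlocks T V :=
  block_le_iff.2 fun _ hx _ hy => Or.inr (Or.inl ⟨hx, hy⟩)

theorem twoBlocks_le_block [DecidableEq α] (h : T ⊆ V) : twoBlocks T V ≤ block V := by
  rintro x y (rfl | ⟨hx, hy⟩ | ⟨hx, hy⟩)
  exacts [Or.inl rfl, Or.inr ⟨h hx, h hy⟩, Or.inr ⟨(mem_sdiff.1 hx).1, (mem_sdiff.1 hy).1⟩]

theorem twoBlocks_rel_iff_mem [DecidableEq α] {a : α} (ha : a ∈ T) :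
    twoBlocks T V x a ↔ x ∈ T := by
  refine ⟨?_, fun hx => Or.inr (Or.inl ⟨hx, ha⟩)⟩
  rintro (rfl | ⟨hx, -⟩ | ⟨-, ha'⟩)
  exacts [ha, hx, absurd ha (mem_sdiff.1 ha').2]

end Setoid

section PermAction

open Setoid

variable {n : ℕ} (g : Equiv.Perm (Fin n))

theorem perm_smul_setoid_le_iff {s t : Setoid (Fin n)} : g • s ≤ g • t ↔ s ≤ t :=
  ⟨fun h => by simpa only [inv_smul_smul] using perm_smul_mono n g⁻¹ h,
    fun h => perm_smul_mono n g h⟩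

theorem perm_smul_inf (s t : Setoid (Fin n)) : g • (s ⊓ t) = g • s ⊓ g • t := rfl

theorem perm_smul_block (T : Finset (Fin n)) : g • block T = block (g • T) := by
  ext x y
  simp only [perm_smul_setoid_rel, block_rel, ← inv_smul_mem_iff, Equiv.Perm.smul_def,
    EmbeddingLike.apply_eq_iff_eq]

theorem perm_smul_twoBlocks (T V : Finset (Fin n)) :
    g • twoBlocks T V = twoBlocks (g • T) (g • V) := by
  ext x y
  simp only [perm_smul_setoid_rel, twoBlocks_rel, ← smul_finset_sdiff, ← inv_smul_mem_iff,
    Equiv.Perm.smul_def, EmbeddingLike.apply_eq_iff_eq]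

theorem twoBlocks_singleton_zero_univ [NeZero n] :
    twoBlocks {0} univ = alphaSetoid n := by
  ext x y
  change _ ↔ x = y ∨ x ≠ 0 ∧ y ≠ 0
  simp only [twoBlocks_rel, mem_singleton, mem_sdiff, mem_univ, true_and]
  constructor
  · rintro (h | ⟨rfl, rfl⟩ | h)
    exacts [Or.inl h, Or.inl rfl, Or.inr h]
  · rintro (h | h)
    exacts [Or.inl h, Or.inr (Or.inr h)]

end PermAction

noncomputable section

open scoped Classical

namespace BarPi

variable {n : ℕ}

theorem exists_rel_ne (π : BarPi n) : ∃ x y, x ≠ y ∧ π.1 x y := by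
  by_contra! h
  refine π.2.1 (le_bot_iff.1 fun x y hxy => ?_)
  rw [Setoid.bot_def]
  by_contra hne
  exact h x y hne hxy

theorem smul_val (g : Equiv.Perm (Fin n)) (π : BarPi n) : (g • π).1 = g • π.1 := rfl

theorem inf_val_smul (g : Equiv.Perm (Fin n)) (s : Finset (BarPi n)) :
    (g • s).inf (·.1) = g • s.inf (·.1) := by
  induction s using Finset.induction_on with
  | empty => exact (perm_smul_top n g).symm
  | insert π s _ ih =>
    rw [smul_finset_insert, inf_insert, inf_insert, ih, perm_smul_inf]
    rfl

variable [NeZero n]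

def zeroBlock (π : BarPi n) : Finset (Fin n) := {x | π.1 x 0}

variable {π ρ : BarPi n} {x y : Fin n} {T V : Finset (Fin n)}

theorem mem_zeroBlock : x ∈ π.zeroBlock ↔ π.1 x 0 := by simp [zeroBlock]

theorem zero_mem_zeroBlock (π : BarPi n) : 0 ∈ π.zeroBlock := mem_zeroBlock.2 (π.1.refl 0)

theorem zeroBlock_mono (h : π ≤ ρ) : π.zeroBlock ⊆ ρ.zeroBlock :=
  fun _ hx => mem_zeroBlock.2 (h (mem_zeroBlock.1 hx))

theorem zeroBlock_ne_univ (π : BarPi n) : π.zeroBlock ≠ univ := fun h =>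
  π.2.2 <| top_le_iff.1 fun x y _ => π.1.trans (mem_zeroBlock.1 (h ▸ mem_univ x))
    (π.1.symm (mem_zeroBlock.1 (h ▸ mem_univ y)))

theorem subset_zeroBlock (h0 : 0 ∈ T) (h : Setoid.block T ≤ π.1) : T ⊆ π.zeroBlock :=
  fun _ hx => mem_zeroBlock.2 (h (Or.inr ⟨hx, h0⟩))

theorem le_twoBlocks_zeroBlock (hV : π.1 ≤ Setoid.block V) :
    π.1 ≤ Setoid.twoBlocks π.zeroBlock V := by
  intro x y hxy
  by_cases hne : x = y
  · exact Or.inl hne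
  obtain ⟨hxV, hyV⟩ := Setoid.rel_mem_of_le_block hV hxy hne
  have hiff : x ∈ π.zeroBlock ↔ y ∈ π.zeroBlock := by
    simp only [mem_zeroBlock]
    exact ⟨π.1.trans (π.1.symm hxy), π.1.trans hxy⟩
  by_cases hx : x ∈ π.zeroBlock
  · exact Or.inr (Or.inl ⟨hx, hiff.1 hx⟩)
  · exact Or.inr (Or.inr ⟨mem_sdiff.2 ⟨hxV, hx⟩, mem_sdiff.2 ⟨hyV, hiff.not.1 hx⟩⟩)

theorem mem_blockSet_iff : π ∈ blockSet n ↔ π.1 = Setoid.block π.zeroBlock := by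
  refine ⟨fun h => ?_, fun h x y hxy => ?_⟩
  · ext x y
    rw [Setoid.block_rel, mem_zeroBlock, mem_zeroBlock]
    refine ⟨fun hxy => (h x y hxy).elim (fun hx => Or.inr ⟨hx, π.1.trans (π.1.symm hxy) hx⟩)
      Or.inl, ?_⟩
    rintro (rfl | ⟨hx, hy⟩)
    exacts [π.1.refl x, π.1.trans hx (π.1.symm hy)]
  · rw [h] at hxy
    rcases hxy with rfl | ⟨hx, -⟩
    exacts [Or.inr rfl, Or.inl (mem_zeroBlock.1 hx)]

theorem not_mem_blockSet_iff :
    π ∉ blockSet n ↔ ∃ x y, x ≠ y ∧ π.1 x y ∧ x ∉ π.zeroBlock ∧ y ∉ π.zeroBlock := by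
  simp only [blockSet, Set.mem_ofPred_eq, mem_zeroBlock]
  push Not
  constructor
  · rintro ⟨x, y, hxy, hx0, hne⟩
    exact ⟨x, y, hne, hxy, hx0, fun hy0 => hx0 (π.1.trans hxy hy0)⟩
  · rintro ⟨x, y, hne, hxy, hx0, -⟩
    exact ⟨x, y, hxy, hx0, hne⟩

theorem two_le_card_zeroBlock (h : π ∈ blockSet n) : 2 ≤ π.zeroBlock.card := by
  obtain ⟨x, y, hne, hxy⟩ := π.exists_rel_ne
  rw [mem_blockSet_iff] at h
  rw [h] at hxy
  obtain ⟨hx, hy⟩ := Setoid.rel_mem_of_le_block le_rfl hxy hne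
  exact one_lt_card.2 ⟨x, hx, y, hy, hne⟩

variable {g : Equiv.Perm (Fin n)}

theorem zeroBlock_smul (hg : g 0 = 0) (π : BarPi n) : (g • π).zeroBlock = g • π.zeroBlock := by
  ext x
  rw [← inv_smul_mem_iff, mem_zeroBlock, mem_zeroBlock, smul_val, perm_smul_setoid_rel,
    Equiv.Perm.inv_eq_iff_eq.2 hg.symm, Equiv.Perm.smul_def]

theorem smul_mem_blockSet_iff (hg : g 0 = 0) : g • π ∈ blockSet n ↔ π ∈ blockSet n := by
  rw [mem_blockSet_iff, mem_blockSet_iff, smul_val, zeroBlock_smul hg, ← perm_smul_block,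
    smul_left_cancel_iff]

theorem zeroBlock_alphaBar (hn : 3 ≤ n) : (alphaBar n hn).zeroBlock = {0} := by
  ext x
  rw [mem_zeroBlock, mem_singleton]
  change x = 0 ∨ x ≠ 0 ∧ (0 : Fin n) ≠ 0 ↔ x = 0
  simp

theorem alphaBar_not_mem_blockSet (hn : 3 ≤ n) : alphaBar n hn ∉ blockSet n := by
  rw [not_mem_blockSet_iff, zeroBlock_alphaBar]
  refine ⟨⟨1, by omega⟩, ⟨2, by omega⟩, ?_, Or.inr ⟨?_, ?_⟩, ?_, ?_⟩ <;>
    simp [Fin.ext_iff]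

end BarPi

/-! ### Toggle matchings on the face poset -/

namespace FacePoset

variable {n : ℕ}

theorem smul_val (g : Equiv.Perm (Fin n)) (c : FacePoset n) : (g • c).1 = g • c.1 := rfl

def ofSubset (d : FacePoset n) (s : Finset (BarPi n)) (hs : s ⊆ d.1) (hne : s.Nonempty) :
    FacePoset n :=
  ⟨s, hne, d.2.2.mono hs⟩

def insertVertex (c : FacePoset n) (π : BarPi n) (h : ∀ ρ ∈ c.1, ρ ≤ π ∨ π ≤ ρ) :
    FacePoset n :=
  ⟨insert π c.1, insert_nonempty _ _, by
    rw [coe_insert]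
    exact c.2.2.insert fun ρ hρ _ => (h ρ hρ).symm⟩

theorem covByWithin_univ_iff {c d : FacePoset n} : CovByWithin Set.univ c d ↔ c.1 ⋖ d.1 := by
  refine ⟨fun ⟨_, _, hcd, hmax⟩ => ⟨hcd, fun s hcs hsd => ?_⟩,
    fun h => ⟨trivial, trivial, h.1, fun e _ hce hed => h.2 hce hed⟩⟩
  exact hmax (d.ofSubset s hsd.le (c.2.1.mono hcs.le)) trivial hcs hsd

end FacePoset

section ToggleMatching

variable {n : ℕ}

structure IsToggle (D : FacePoset n → Prop) (t : FacePoset n → BarPi n) : Prop where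
  comparable : ∀ c, D c → ∀ π ∈ c.1, π ≤ t c ∨ t c ≤ π
  stable : ∀ c d, D c → insert (t c) c.1 = insert (t c) d.1 → D d ∧ t d = t c

def toggleMatching (D : FacePoset n → Prop) (t : FacePoset n → BarPi n) :
    Set (FacePoset n × FacePoset n) :=
  {p | D p.1 ∧ t p.1 ∉ p.1.1 ∧ p.2.1 = insert (t p.1) p.1.1}

variable {D : FacePoset n → Prop} {t : FacePoset n → BarPi n}

theorem smul_mem_toggleMatching {g : Equiv.Perm (Fin n)}
    (hg : ∀ c, D c → D (g • c) ∧ t (g • c) = g • t c) {p : FacePoset n × FacePoset n}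
    (hp : p ∈ toggleMatching D t) : (g • p.1, g • p.2) ∈ toggleMatching D t := by
  obtain ⟨hD, hgt⟩ := hg _ hp.1
  refine ⟨hD, ?_, ?_⟩ <;> simp only [hgt, FacePoset.smul_val]
  · exact (smul_mem_smul_finset_iff g).not.2 hp.2.1
  · rw [hp.2.2, smul_finset_insert]

theorem fst_val_eq_erase_of_mem_toggleMatching {p : FacePoset n × FacePoset n}
    (hp : p ∈ toggleMatching D t) : p.1.1 = p.2.1.erase (t p.1) := by
  rw [hp.2.2, erase_insert hp.2.1]

theorem exists_val_eq_insert_erase_of_covByWithin {a b a' : FacePoset n}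
    (hab : (a, b) ∈ toggleMatching D t) (hne : a' ≠ a) (hcov : CovByWithin Set.univ a' b) :
    ∃ y ∈ a.1, a'.1 = insert (t a) (a.1.erase y) := by
  obtain ⟨-, hτ, hb⟩ := hab
  obtain ⟨y, hya', hyb⟩ := covBy_iff_exists_insert.1 (FacePoset.covByWithin_univ_iff.1 hcov)
  have hyτ : y ≠ t a := by
    rintro rfl
    exact hne (Subtype.ext (by rw [← erase_insert hya', hyb, hb, erase_insert hτ]))
  have hy : y ∈ insert (t a) a.1 := hb ▸ hyb ▸ mem_insert_self _ _
  exact ⟨y, (mem_insert.1 hy).resolve_left hyτ,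
    by rw [← erase_insert hya', hyb, hb, erase_insert_of_ne hyτ.symm]⟩

namespace IsToggle

variable (h : IsToggle D t)
include h

theorem snd_of_mem {p : FacePoset n × FacePoset n} (hp : p ∈ toggleMatching D t) :
    D p.2 ∧ t p.2 = t p.1 :=
  h.stable _ _ hp.1 (by rw [hp.2.2, insert_idem])

theorem isMatchingOn : IsMatchingOn Set.univ (toggleMatching D t) := by
  refine ⟨fun p hp => FacePoset.covByWithin_univ_iff.2
    (covBy_iff_exists_insert.2 ⟨_, hp.2.1, hp.2.2.symm⟩), ?_⟩
  rintro ⟨a, b⟩ hp ⟨a', b'⟩ hq hpq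
  have hb := (h.snd_of_mem hp).2
  have hb' := (h.snd_of_mem hq).2
  have mem_b : t a ∈ b.1 := hp.2.2 ▸ mem_insert_self _ _
  have mem_b' : t a' ∈ b'.1 := hq.2.2 ▸ mem_insert_self _ _
  dsimp only at hpq hb hb' mem_b mem_b'
  rcases hpq with rfl | rfl | rfl | rfl
  · exact Prod.ext rfl (Subtype.ext (hp.2.2.trans hq.2.2.symm))
  · exact absurd (hb' ▸ mem_b') hp.2.1
  · exact absurd (hb ▸ mem_b) hq.2.1
  · have : a = a' := Subtype.ext <| by
      rw [fst_val_eq_erase_of_mem_toggleMatching hp, fst_val_eq_erase_of_mem_toggleMatching hq]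
      dsimp only
      rw [← hb, ← hb']
    rw [this]

theorem criticalSet_eq :
    criticalSet Set.univ (toggleMatching D t) = {c | ¬D c} ∪ {c | D c ∧ c.1 = {t c}} := by
  ext c
  simp only [criticalSet, Set.mem_univ, true_and, Set.mem_ofPred_eq, Set.mem_union]
  constructor
  · intro hc
    by_contra! hne
    obtain ⟨hD, hsing⟩ := hne
    have hmem : t c ∈ c.1 := by
      by_contra hnot
      exact (hc (c, c.insertVertex _ (h.comparable c hD)) ⟨hD, hnot, rfl⟩).1 rfl
    have hrest : (c.1.erase (t c)).Nonempty := by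
      rw [nonempty_iff_ne_empty, Ne, erase_eq_empty_iff, not_or]
      exact ⟨c.2.1.ne_empty, hsing hD⟩
    let a := c.ofSubset _ (erase_subset (t c) c.1) hrest
    have ha1 : a.1 = c.1.erase (t c) := rfl
    obtain ⟨ha, hta⟩ := h.stable c a hD (by rw [ha1, insert_erase hmem, insert_eq_of_mem hmem])
    refine (hc (a, c) ⟨ha, ?_, ?_⟩).2 rfl <;> dsimp only <;> rw [hta, ha1]
    · exact notMem_erase _ _
    · exact (insert_erase hmem).symm
  · rintro (hD | ⟨hD, hsing⟩) p hp
    · exact ⟨fun he => hD (he ▸ hp.1), fun he => hD (he ▸ (h.snd_of_mem hp).1)⟩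
    · refine ⟨fun he => ?_, fun he => ?_⟩
      · subst he
        exact hp.2.1 (hsing ▸ mem_singleton_self _)
      · subst he
        have hpe := fst_val_eq_erase_of_mem_toggleMatching hp
        rw [hsing, ← (h.snd_of_mem hp).2, erase_singleton] at hpe
        exact p.1.2.1.ne_empty hpe

end IsToggle

end ToggleMatching

/-! ### The flag and the toggle of a chain of partitions -/

namespace FacePoset

variable {n : ℕ} [NeZero n]

def flag (c : FacePoset n) : Finset (Finset (Fin n)) :=
  insert {0} (insert univ ({π ∈ c.1 | π ∈ blockSet n}.image BarPi.zeroBlock))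

def HasWideStep (c : FacePoset n) : Prop := c.flag.wideSteps.Nonempty

def IsHigh (F : Finset (Finset (Fin n))) (π : BarPi n) : Prop :=
  π ∉ blockSet n ∧ Setoid.block F.gapBot ≤ π.1 ∧ π.1 ≤ Setoid.block F.gapTop ∧
    ¬π.zeroBlock ⊆ F.gapBot

def IsOuter (F : Finset (Finset (Fin n))) (π : BarPi n) : Prop :=
  π ∉ blockSet n ∧ ¬(Setoid.block F.gapBot ≤ π.1 ∧ π.1 ≤ Setoid.block F.gapTop)

def highPart (c : FacePoset n) : Finset (BarPi n) := {π ∈ c.1 | IsHigh c.flag π}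

def toggleSetoid (c : FacePoset n) : Setoid (Fin n) :=
  Setoid.twoBlocks c.flag.gapBot c.flag.gapTop ⊓ c.highPart.inf (·.1)

variable {c d : FacePoset n} {π : BarPi n} {T : Finset (Fin n)}

theorem mem_flag :
    T ∈ c.flag ↔ T = {0} ∨ T = univ ∨ ∃ π ∈ c.1, π ∈ blockSet n ∧ π.zeroBlock = T := by
  simp [flag, and_assoc]

theorem singleton_zero_mem_flag (c : FacePoset n) : {0} ∈ c.flag := mem_insert_self _ _

theorem univ_mem_flag (c : FacePoset n) : univ ∈ c.flag :=
  mem_insert_of_mem (mem_insert_self _ _)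

theorem zeroBlock_mem_flag (hπ : π ∈ c.1) (hA : π ∈ blockSet n) : π.zeroBlock ∈ c.flag :=
  mem_flag.2 (Or.inr (Or.inr ⟨π, hπ, hA, rfl⟩))

theorem zero_mem_of_mem_flag (hT : T ∈ c.flag) : 0 ∈ T := by
  rcases mem_flag.1 hT with rfl | rfl | ⟨π, -, -, rfl⟩
  exacts [mem_singleton_self 0, mem_univ 0, π.zero_mem_zeroBlock]

theorem isChain_flag (c : FacePoset n) : IsChain (· ≤ ·) (c.flag : Set (Finset (Fin n))) := by
  have hsing : ∀ T ∈ c.flag, {0} ⊆ T := fun T hT =>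
    singleton_subset_iff.2 (zero_mem_of_mem_flag hT)
  intro T hT U hU _
  rcases mem_flag.1 hT with rfl | rfl | ⟨π, hπ, -, rfl⟩
  · exact Or.inl (hsing U hU)
  · exact Or.inr (subset_univ U)
  rcases mem_flag.1 hU with rfl | rfl | ⟨ρ, hρ, -, rfl⟩
  · exact Or.inr (hsing _ hT)
  · exact Or.inl (subset_univ _)
  · exact (c.2.2.total hπ hρ).imp BarPi.zeroBlock_mono BarPi.zeroBlock_mono

theorem le_block_or_block_le_of_mem_flag (hπ : π ∈ c.1) (hT : T ∈ c.flag) :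
    π.1 ≤ Setoid.block T ∨ Setoid.block T ≤ π.1 := by
  rcases mem_flag.1 hT with rfl | rfl | ⟨ρ, hρ, hA, rfl⟩
  · exact Or.inr (by rw [Setoid.block_singleton]; exact bot_le)
  · exact Or.inl (by rw [Setoid.block_univ]; exact le_top)
  · rw [← BarPi.mem_blockSet_iff.1 hA]
    exact c.2.2.total hπ hρ

theorem flag_congr (h : {π ∈ c.1 | π ∈ blockSet n} = {π ∈ d.1 | π ∈ blockSet n}) :
    c.flag = d.flag := by
  rw [flag, flag, h]

theorem flag_eq_pair (hc : c.1 = {π}) (hA : π ∉ blockSet n) : c.flag = {{0}, univ} := by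
  rw [flag, hc, filter_singleton, if_neg hA, image_empty, insert_empty]

theorem card_flag (h : ∀ π ∈ c.1, π ∈ blockSet n) : c.flag.card = c.1.card + 2 := by
  have hinj : Set.InjOn BarPi.zeroBlock (c.1 : Set (BarPi n)) := fun π hπ ρ hρ he =>
    Subtype.ext <| by
      rw [BarPi.mem_blockSet_iff.1 (h π hπ), BarPi.mem_blockSet_iff.1 (h ρ hρ), he]
  obtain ⟨π, hπ⟩ := c.2.1
  have h0 : ({0} : Finset (Fin n)) ∉ insert univ (c.1.image BarPi.zeroBlock) := by
    simp only [mem_insert, mem_image, not_or, not_exists, not_and]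
    refine ⟨fun he => ?_, fun ρ hρ he => ?_⟩
    · have := (BarPi.two_le_card_zeroBlock (h π hπ)).trans (card_le_univ _)
      rw [Fintype.card_fin, ← card_fin n, ← he, card_singleton] at this
      omega
    · have := BarPi.two_le_card_zeroBlock (h ρ hρ)
      rw [he, card_singleton] at this
      omega
  have hu : univ ∉ c.1.image BarPi.zeroBlock := by
    simpa using fun ρ _ => ρ.zeroBlock_ne_univ
  rw [flag, filter_true_of_mem h, card_insert_of_notMem h0, card_insert_of_notMem hu,
    card_image_of_injOn hinj]

theorem mem_blockSet_of_wideSteps_eq_empty (h : c.flag.wideSteps = ∅) (hπ : π ∈ c.1) :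
    π ∈ blockSet n := by
  by_contra hA
  obtain ⟨x, y, hne, hxy, hx, hy⟩ := BarPi.not_mem_blockSet_iff.1 hA
  -- the step above the largest flag member `T` inside the zero block of `π` is wide
  set S := {T ∈ c.flag | T ⊆ π.zeroBlock}
  have hTS : S.sup id ∈ S := sup_id_mem_of_isChain
    ((isChain_flag c).mono (coe_subset.2 (filter_subset _ _)))
    ⟨{0}, mem_filter.2 ⟨singleton_zero_mem_flag c, singleton_subset_iff.2 π.zero_mem_zeroBlock⟩⟩
  set T := S.sup id
  obtain ⟨hTF, hTπ⟩ := mem_filter.1 hTS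
  have hTu : T ≠ univ := fun he => π.zeroBlock_ne_univ (univ_subset_iff.1 (he ▸ hTπ))
  obtain ⟨hVF, hTV⟩ := nextIn_mem (isChain_flag c) (univ_mem_flag c) hTu
  have hxyV : x ∈ c.flag.nextIn T ∧ y ∈ c.flag.nextIn T := by
    rcases mem_flag.1 hVF with hV | hV | ⟨ρ, hρ, hρA, hV⟩
    · rw [hV, ssubset_singleton_iff] at hTV
      exact absurd (hTV ▸ zero_mem_of_mem_flag hTF) (notMem_empty 0)
    · rw [hV]
      exact ⟨mem_univ _, mem_univ _⟩
    · rcases c.2.2.total hπ hρ with hle | hle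
      · rw [← hV]
        exact Setoid.rel_mem_of_le_block
          ((show π.1 ≤ ρ.1 from hle).trans (BarPi.mem_blockSet_iff.1 hρA).le) hxy hne
      · exact absurd (le_sup (f := id) (mem_filter.2 ⟨hVF, hV ▸ BarPi.zeroBlock_mono hle⟩))
          hTV.not_subset
  have hwide : T ∈ c.flag.wideSteps := mem_filter.2 ⟨hTF, one_lt_card.2
    ⟨x, mem_sdiff.2 ⟨hxyV.1, fun h => hx (hTπ h)⟩, y, mem_sdiff.2 ⟨hxyV.2, fun h => hy (hTπ h)⟩,
      hne⟩⟩
  simp [h] at hwide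

theorem not_hasWideStep_iff : ¬c.HasWideStep ↔ c ∈ Cn n := by
  have hcount := card_eq_iff_wideSteps_eq_empty (isChain_flag c) (univ_mem_flag c)
    (singleton_zero_mem_flag c) fun _ => zero_mem_of_mem_flag
  rw [Fintype.card_fin] at hcount
  rw [HasWideStep, not_nonempty_iff_eq_empty]
  refine ⟨fun h => ?_, fun ⟨hA, hcard⟩ => ?_⟩
  · have hA : ∀ π ∈ c.1, π ∈ blockSet n := fun π => mem_blockSet_of_wideSteps_eq_empty h
    refine ⟨fun π hπ => hA π hπ, ?_⟩
    have := hcount.2 h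
    rw [card_flag hA] at this
    omega
  · have := card_pos.2 c.2.1
    rw [← hcount, card_flag fun π hπ => hA (mem_coe.2 hπ)]
    omega

theorem block_gapBot_le_toggleSetoid (c : FacePoset n) :
    Setoid.block c.flag.gapBot ≤ c.toggleSetoid :=
  le_inf Setoid.block_le_twoBlocks (Finset.le_inf fun _ hρ => (mem_filter.1 hρ).2.2.1)

theorem toggleSetoid_le_of_mem_highPart (hπ : π ∈ c.highPart) : c.toggleSetoid ≤ π.1 :=
  inf_le_right.trans (inf_le hπ)

theorem gapBot_mem_flag (h : c.HasWideStep) : c.flag.gapBot ∈ c.flag :=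
  (mem_filter.1 (gapBot_mem (isChain_flag c) h)).1

theorem zero_mem_gapBot (h : c.HasWideStep) : 0 ∈ c.flag.gapBot :=
  zero_mem_of_mem_flag (gapBot_mem_flag h)

theorem toggleSetoid_le_block_gapTop (h : c.HasWideStep) :
    c.toggleSetoid ≤ Setoid.block c.flag.gapTop :=
  inf_le_left.trans <|
    Setoid.twoBlocks_le_block (gapTop_mem (isChain_flag c) (univ_mem_flag c) h).2.subset

theorem toggleSetoid_rel_zero_iff (h : c.HasWideStep) {x : Fin n} :
    c.toggleSetoid x 0 ↔ x ∈ c.flag.gapBot :=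
  ⟨fun hx => (Setoid.twoBlocks_rel_iff_mem (zero_mem_gapBot h)).1
      (inf_le_left (b := c.highPart.inf (·.1)) hx),
    fun hx => block_gapBot_le_toggleSetoid c (Or.inr ⟨hx, zero_mem_gapBot h⟩)⟩

theorem exists_toggleSetoid_rel (h : c.HasWideStep) :
    ∃ x y, x ≠ y ∧ c.toggleSetoid x y ∧ x ∉ c.flag.gapBot := by
  suffices ∃ x y, x ≠ y ∧ x ∈ c.flag.gapTop \ c.flag.gapBot ∧
      y ∈ c.flag.gapTop \ c.flag.gapBot ∧ c.highPart.inf (·.1) x y by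
    obtain ⟨x, y, hne, hx, hy, hxy⟩ := this
    exact ⟨x, y, hne, Setoid.inf_iff_and.2 ⟨Or.inr (Or.inr ⟨hx, hy⟩), hxy⟩, (mem_sdiff.1 hx).2⟩
  rcases c.highPart.eq_empty_or_nonempty with he | hne
  · obtain ⟨x, hx, y, hy, hne⟩ := one_lt_card.1 (one_lt_card_gapTop_sdiff (isChain_flag c) h)
    exact ⟨x, y, hne, hx, hy, by rw [he, inf_empty]; trivial⟩
  obtain ⟨ρ, hρ, hρinf⟩ : ∃ ρ ∈ c.highPart, ρ.1 = c.highPart.inf (·.1) := by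
    have hchain : IsChain (· ≤ ·) (c.highPart.image (·.1) : Set (Setoid (Fin n))) := by
      rw [coe_image]
      exact IsChain.image_of_map_rel _ _ (fun ρ : BarPi n => ρ.1) (fun _ _ => id)
        (c.2.2.mono (coe_subset.2 (filter_subset (IsHigh c.flag) _)))
    simpa [inf_image] using inf_id_mem_of_isChain hchain (hne.image _)
  obtain ⟨-, hρA, hTρ, hρV, -⟩ := mem_filter.1 hρ
  obtain ⟨x, y, hne, hxy, hx, hy⟩ := BarPi.not_mem_blockSet_iff.1 hρA
  have hTρ' := BarPi.subset_zeroBlock (zero_mem_gapBot h) hTρ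
  obtain ⟨hxV, hyV⟩ := Setoid.rel_mem_of_le_block hρV hxy hne
  exact ⟨x, y, hne, mem_sdiff.2 ⟨hxV, fun h => hx (hTρ' h)⟩,
    mem_sdiff.2 ⟨hyV, fun h => hy (hTρ' h)⟩, hρinf ▸ hxy⟩

theorem toggleSetoid_ne_bot (h : c.HasWideStep) : c.toggleSetoid ≠ ⊥ := fun hbot => by
  obtain ⟨x, y, hne, hxy, -⟩ := exists_toggleSetoid_rel h
  rw [hbot, Setoid.bot_def] at hxy
  exact hne hxy

theorem toggleSetoid_ne_top (h : c.HasWideStep) : c.toggleSetoid ≠ ⊤ := fun htop => by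
  obtain ⟨x, -, -, -, hx⟩ := exists_toggleSetoid_rel h
  exact hx ((toggleSetoid_rel_zero_iff h).1 (htop ▸ trivial))

/-- On a chain without a wide step this is a junk value, some member of the chain. -/
def toggle (c : FacePoset n) : BarPi n :=
  if h : c.HasWideStep then
    (⟨c.toggleSetoid, toggleSetoid_ne_bot h, toggleSetoid_ne_top h⟩ : BarPi n)
  else c.2.1.choose

theorem toggle_val (h : c.HasWideStep) : c.toggle.1 = c.toggleSetoid := by
  rw [toggle]
  exact congrArg Subtype.val (dif_pos h)

theorem zeroBlock_toggle (h : c.HasWideStep) : c.toggle.zeroBlock = c.flag.gapBot := by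
  ext x
  rw [BarPi.mem_zeroBlock, toggle_val h, toggleSetoid_rel_zero_iff h]

theorem toggle_not_mem_blockSet (h : c.HasWideStep) : c.toggle ∉ blockSet n := by
  obtain ⟨x, y, hne, hxy, hx⟩ := exists_toggleSetoid_rel h
  rw [← toggle_val h] at hxy
  have hx' : x ∉ c.toggle.zeroBlock := zeroBlock_toggle h ▸ hx
  refine BarPi.not_mem_blockSet_iff.2 ⟨x, y, hne, hxy, hx', fun hy => hx' ?_⟩
  exact BarPi.mem_zeroBlock.2 (c.toggle.1.trans hxy (BarPi.mem_zeroBlock.1 hy))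

theorem not_isHigh_toggle (h : c.HasWideStep) : ¬IsHigh c.flag c.toggle :=
  fun hh => hh.2.2.2 (zeroBlock_toggle h).subset

theorem not_isOuter_toggle (h : c.HasWideStep) : ¬IsOuter c.flag c.toggle := fun ho =>
  ho.2 ⟨(toggle_val h).symm ▸ block_gapBot_le_toggleSetoid c,
    (toggle_val h).symm ▸ toggleSetoid_le_block_gapTop h⟩

theorem toggle_comparable (h : c.HasWideStep) (hπ : π ∈ c.1) : π ≤ c.toggle ∨ c.toggle ≤ π := by
  change π.1 ≤ c.toggle.1 ∨ c.toggle.1 ≤ π.1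
  rw [toggle_val h]
  by_cases hA : π ∈ blockSet n
  · rw [BarPi.mem_blockSet_iff.1 hA]
    exact (subset_gapBot_or_gapTop_subset (isChain_flag c) h (zeroBlock_mem_flag hπ hA)).imp
      (fun hle => (Setoid.block_mono hle).trans (block_gapBot_le_toggleSetoid c))
      (fun hle => (toggleSetoid_le_block_gapTop h).trans (Setoid.block_mono hle))
  rcases le_block_or_block_le_of_mem_flag hπ (gapBot_mem_flag h) with hT | hT
  · exact Or.inl (hT.trans (block_gapBot_le_toggleSetoid c))
  rcases le_block_or_block_le_of_mem_flag hπ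
    (gapTop_mem (isChain_flag c) (univ_mem_flag c) h).1 with hV | hV
  swap
  · exact Or.inr ((toggleSetoid_le_block_gapTop h).trans hV)
  by_cases hB : π.zeroBlock ⊆ c.flag.gapBot
  · have hB' : π.zeroBlock = c.flag.gapBot :=
      hB.antisymm (BarPi.subset_zeroBlock (zero_mem_gapBot h) hT)
    refine Or.inl (le_inf (hB' ▸ BarPi.le_twoBlocks_zeroBlock hV) (Finset.le_inf fun ρ hρ => ?_))
    obtain ⟨hρc, -, -, -, hρB⟩ := mem_filter.1 hρ
    exact (c.2.2.total hπ hρc).resolve_right fun hle => hρB ((BarPi.zeroBlock_mono hle).trans hB)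
  · exact Or.inr (toggleSetoid_le_of_mem_highPart (mem_filter.2 ⟨hπ, hA, hT, hV, hB⟩))

theorem toggle_eq_of_filter_eq (h : c.HasWideStep)
    (hA : {π ∈ c.1 | π ∈ blockSet n} = {π ∈ d.1 | π ∈ blockSet n})
    (hH : {π ∈ c.1 | IsHigh c.flag π} = {π ∈ d.1 | IsHigh c.flag π}) :
    d.HasWideStep ∧ d.toggle = c.toggle := by
  have hflag := flag_congr hA
  have hd : d.HasWideStep := by rwa [HasWideStep, ← hflag]
  refine ⟨hd, Subtype.ext ?_⟩
  rw [toggle_val hd, toggle_val h, toggleSetoid, toggleSetoid, highPart, highPart, ← hflag, hH]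

theorem isToggle : IsToggle (HasWideStep (n := n)) toggle where
  comparable _ h _ hπ := toggle_comparable h hπ
  stable _ _ h hcd := toggle_eq_of_filter_eq h
    (filter_eq_filter_of_insert_eq (toggle_not_mem_blockSet h) hcd)
    (filter_eq_filter_of_insert_eq (not_isHigh_toggle h) hcd)

theorem toggleSetoid_of_eq_singleton (hn : 3 ≤ n) (hc : c.1 = {π}) (hA : π ∉ blockSet n)
    (h0 : π.zeroBlock ⊆ {0}) : c.HasWideStep ∧ c.toggleSetoid = alphaSetoid n := by
  have hcard : 3 ≤ Fintype.card (Fin n) := by simpa using hn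
  have hflag := flag_eq_pair hc hA
  have hhigh : c.highPart = ∅ := by
    rw [highPart, hc, filter_singleton,
      if_neg fun hH => hH.2.2.2 (by rwa [hflag, gapBot_pair 0 hcard])]
  refine ⟨by rw [HasWideStep, hflag, wideSteps_pair 0 hcard]; exact singleton_nonempty _, ?_⟩
  rw [toggleSetoid, hhigh, inf_empty, inf_top_eq, hflag, gapBot_pair 0 hcard, gapTop_pair 0 hcard,
    twoBlocks_singleton_zero_univ]

theorem eq_alphaChain_iff (hn : 3 ≤ n) :
    c.HasWideStep ∧ c.1 = {c.toggle} ↔ c = alphaChain n hn := by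
  constructor
  · rintro ⟨h, hc⟩
    have hτ : c.toggle = alphaBar n hn := Subtype.ext <| by
      rw [toggle_val h]
      exact (toggleSetoid_of_eq_singleton hn hc (toggle_not_mem_blockSet h)
        (by rw [zeroBlock_toggle h, flag_eq_pair hc (toggle_not_mem_blockSet h),
          gapBot_pair 0 (by simpa using hn)])).2
    exact Subtype.ext (hc.trans (by rw [hτ]; rfl))
  · rintro rfl
    have hα := toggleSetoid_of_eq_singleton hn (rfl : (alphaChain n hn).1 = {alphaBar n hn})
      (BarPi.alphaBar_not_mem_blockSet hn) (BarPi.zeroBlock_alphaBar hn).subset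
    refine ⟨hα.1, ?_⟩
    change {alphaBar n hn} = {(alphaChain n hn).toggle}
    rw [Subtype.ext ((toggle_val hα.1).trans hα.2 :
      (alphaChain n hn).toggle.1 = (alphaBar n hn).1)]

section Equivariance

variable {g : Equiv.Perm (Fin n)} (hg : g 0 = 0)
include hg

theorem flag_smul (c : FacePoset n) : (g • c).flag = g • c.flag := by
  have himage : ∀ s : Finset (BarPi n),
      (g • s).image BarPi.zeroBlock = g • s.image BarPi.zeroBlock := fun s => by
    simp only [smul_finset_def, image_image]
    exact image_congr fun π _ => BarPi.zeroBlock_smul hg π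
  simp only [flag, smul_finset_insert, smul_finset_singleton, Equiv.Perm.smul_def, hg,
    smul_finset_univ, smul_val, filter_smul_finset, BarPi.smul_mem_blockSet_iff hg, himage]

theorem hasWideStep_smul : (g • c).HasWideStep ↔ c.HasWideStep := by
  rw [HasWideStep, HasWideStep, flag_smul hg, wideSteps_smul, smul_finset_nonempty]

theorem isHigh_smul {F : Finset (Finset (Fin n))} : IsHigh (g • F) (g • π) ↔ IsHigh F π := by
  simp only [IsHigh, BarPi.smul_mem_blockSet_iff hg, gapBot_smul, gapTop_smul, ← perm_smul_block,
    BarPi.smul_val, perm_smul_setoid_le_iff, BarPi.zeroBlock_smul hg,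
    smul_finset_subset_smul_finset_iff]

theorem toggleSetoid_smul : (g • c).toggleSetoid = g • c.toggleSetoid := by
  have hhigh : (g • c).highPart = g • c.highPart := by
    simp only [highPart, flag_smul hg, smul_val, filter_smul_finset, isHigh_smul hg]
  rw [toggleSetoid, toggleSetoid, flag_smul hg, gapBot_smul, gapTop_smul, hhigh,
    perm_smul_inf, perm_smul_twoBlocks, BarPi.inf_val_smul]

theorem toggle_smul (h : c.HasWideStep) : (g • c).toggle = g • c.toggle :=
  Subtype.ext <| by
    rw [toggle_val ((hasWideStep_smul hg).2 h), BarPi.smul_val, toggle_val h,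
      toggleSetoid_smul hg]

end Equivariance

def rank (c : FacePoset n) : ℕ ×ₗ (ℕ ×ₗ ℕ) :=
  toLex (#{π ∈ c.1 | π ∈ blockSet n},
    toLex (#{π ∈ c.1 | IsOuter c.flag π}, #{π ∈ c.1 | IsHigh c.flag π}))

theorem rank_lt {a b a' b' : FacePoset n} (hab : (a, b) ∈ toggleMatching HasWideStep toggle)
    (ha' : (a', b') ∈ toggleMatching HasWideStep toggle) (hne : a' ≠ a)
    (hcov : CovByWithin Set.univ a' b) : a'.rank < a.rank := by
  have ha := hab.1
  obtain ⟨y, hy, ha'1⟩ := exists_val_eq_insert_erase_of_covByWithin hab hne hcov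
  have hfilter : ∀ (p : BarPi n → Prop) [DecidablePred p], ¬p a.toggle →
      {π ∈ a'.1 | p π} = {π ∈ a.1 | p π}.erase y := fun _ _ hp => by
    rw [ha'1, filter_insert_erase_of_not hp]
  simp only [rank, Prod.Lex.toLex_lt_toLex]
  rw [hfilter _ (toggle_not_mem_blockSet ha)]
  by_cases hyA : y ∈ blockSet n
  · exact Or.inl (card_erase_lt_of_mem (mem_filter.2 ⟨hy, hyA⟩))
  have hA : {π ∈ a.1 | π ∈ blockSet n}.erase y = {π ∈ a.1 | π ∈ blockSet n} :=
    erase_eq_of_notMem fun h => hyA (mem_filter.1 h).2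
  have hA' : {π ∈ a'.1 | π ∈ blockSet n} = {π ∈ a.1 | π ∈ blockSet n} := by
    rw [hfilter _ (toggle_not_mem_blockSet ha), hA]
  refine Or.inr ⟨congrArg card hA, ?_⟩
  rw [flag_congr hA', hfilter _ (not_isOuter_toggle ha), hfilter _ (not_isHigh_toggle ha)]
  by_cases hyO : IsOuter a.flag y
  · exact Or.inl (card_erase_lt_of_mem (mem_filter.2 ⟨hy, hyO⟩))
  rw [erase_eq_of_notMem fun h => hyO (mem_filter.1 h).2]
  by_cases hyH : IsHigh a.flag y
  · exact Or.inr ⟨rfl, card_erase_lt_of_mem (mem_filter.2 ⟨hy, hyH⟩)⟩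
  -- otherwise `a'` has the same toggle as `a`, which lies in `a'`
  have hH : {π ∈ a.1 | IsHigh a.flag π} = {π ∈ a'.1 | IsHigh a.flag π} := by
    rw [hfilter _ (not_isHigh_toggle ha), erase_eq_of_notMem fun h => hyH (mem_filter.1 h).2]
  have hsame := (toggle_eq_of_filter_eq ha hA'.symm hH).2
  exact absurd (hsame ▸ ha'1 ▸ mem_insert_self _ _) ha'.2.1

end FacePoset

end

/-- For every `n ≥ 3`, there exists an `(S_1 × S_{n-1})`-equivariant acyclic matching on
the face poset of the nerve of `Π̄_n` (nonempty finite chains ordered by inclusion) whose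
set of critical elements is exactly `C_n ∪ {α_n}`, where `α_n` is the one-element chain
consisting of the partition `{{1}, {2,…,n}}`. -/
theorem exists_equivariant_matching_facePoset (n : ℕ) [NeZero n] (hn : 3 ≤ n) :
    ∃ M : Set (FacePoset n × FacePoset n),
      IsAcyclicMatchingOn Set.univ M ∧
      (∀ g ∈ S1Sn n, ∀ p ∈ M, (g • p.1, g • p.2) ∈ M) ∧
      criticalSet Set.univ M = Cn n ∪ {alphaChain n hn} := by
  open FacePoset in
  refine ⟨toggleMatching HasWideStep toggle,
    isToggle.isMatchingOn.isAcyclicMatchingOn_of_lt rank fun _ _ _ _ => rank_lt,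
    fun g hg _ => smul_mem_toggleMatching fun _ h =>
      ⟨(hasWideStep_smul (MulAction.mem_stabilizer_iff.1 hg)).2 h,
        toggle_smul (MulAction.mem_stabilizer_iff.1 hg) h⟩, ?_⟩
  rw [isToggle.criticalSet_eq]
  exact Set.ext fun c => or_congr not_hasWideStep_iff (eq_alphaChain_iff hn)
end

section
/- Let n ≥ 3 and let G be a subgroup of S_1×S_{n-1}. Then the number of G-orbits on the set C_n equals the index of G in S_1×S_{n-1}. -/
/-!
A partition in `blockSet n` is determined by its block `zeroBlock s` containing `0`, and the
members of a chain in `C_n` have nested such blocks of pairwise distinct sizes in `[2, n - 1]`.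
There are `n - 2` of them, so together with `∅`, `{0}` and `Fin n` they form a complete flag
of `Fin n`, i.e. the initial segments `σ {0, …, m - 1}` of a unique permutation `σ`, which
fixes `0`. Hence `σ ↦ permChain σ` is an `S_1 × S_{n-1}`-equivariant bijection onto `C_n`:
the action on `C_n` is simply transitive, and its `G`-orbits correspond to the right cosets
of `G`.
-/

open Finset

section Orbits

variable {H X : Type*} [Group H] [MulAction H X]

theorem orbit_eq_orbit_iff_of_equivariant {φ : H → X} (hφ : Function.Injective φ)
    (hsmul : ∀ g h, φ (g * h) = g • φ h) (G : Subgroup H) (h₁ h₂ : H) :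
    MulAction.orbit G (φ h₁) = MulAction.orbit G (φ h₂) ↔
      QuotientGroup.rightRel G h₁ h₂ := by
  rw [MulAction.orbit_eq_iff, MulAction.mem_orbit_iff, QuotientGroup.rightRel_apply]
  constructor
  · rintro ⟨g, hg⟩
    rw [Subgroup.smul_def, ← hsmul] at hg
    rw [← hφ hg]
    simp
  · intro hG
    refine ⟨⟨h₁ * h₂⁻¹, by simpa using G.inv_mem hG⟩, ?_⟩
    rw [Subgroup.smul_def, ← hsmul, inv_mul_cancel_right]

theorem ncard_orbits_eq_index_of_equivariant {φ : H → X} (hφ : Function.Injective φ)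
    (hsmul : ∀ g h, φ (g * h) = g • φ h) (G : Subgroup H) :
    {S : Set X | ∃ x ∈ Set.range φ, S = MulAction.orbit G x}.ncard = G.index := by
  let F : Quotient (QuotientGroup.rightRel G) → Set X :=
    Quotient.lift (fun h => MulAction.orbit G (φ h)) fun h₁ h₂ hr =>
      (orbit_eq_orbit_iff_of_equivariant hφ hsmul G h₁ h₂).mpr hr
  have hF : Function.Injective F := by
    rintro ⟨h₁⟩ ⟨h₂⟩ he
    exact Quotient.sound ((orbit_eq_orbit_iff_of_equivariant hφ hsmul G h₁ h₂).mp he)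
  have hrange : {S : Set X | ∃ x ∈ Set.range φ, S = MulAction.orbit G x} = Set.range F := by
    ext S
    constructor
    · rintro ⟨_, ⟨h, rfl⟩, rfl⟩
      exact ⟨⟦h⟧, rfl⟩
    · rintro ⟨⟨h⟩, rfl⟩
      exact ⟨_, ⟨h, rfl⟩, rfl⟩
  rw [hrange, Set.ncard_range_of_injective hF, Subgroup.index_eq_card,
    Nat.card_congr (QuotientGroup.quotientRightRelEquivQuotientLeftRel G)]

end Orbits

section BlockSetoid

variable {α : Type*} [DecidableEq α]

def blockSetoid (B : Finset α) : Setoid α :=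
  Setoid.ker fun x => if x ∈ B then none else some x

theorem blockSetoid_rel {B : Finset α} {x y : α} :
    blockSetoid B x y ↔ x = y ∨ x ∈ B ∧ y ∈ B := by
  rw [blockSetoid, Setoid.ker_def]
  split_ifs with hx hy hy <;> grind

theorem blockSetoid_le_blockSetoid_iff {B C : Finset α} (hB : 1 < #B) :
    blockSetoid B ≤ blockSetoid C ↔ B ⊆ C := by
  refine ⟨fun h x hx => ?_, fun h x y hxy => ?_⟩
  · obtain ⟨y, hy, hyx⟩ := exists_mem_ne hB x
    have := h (blockSetoid_rel.mpr (Or.inr ⟨hx, hy⟩))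
    rcases blockSetoid_rel.mp this with rfl | ⟨hx', _⟩
    exacts [absurd rfl hyx, hx']
  · rcases blockSetoid_rel.mp hxy with rfl | ⟨hx, hy⟩
    exacts [blockSetoid_rel.mpr (Or.inl rfl), blockSetoid_rel.mpr (Or.inr ⟨h hx, h hy⟩)]

theorem blockSetoid_inj {B C : Finset α} (hB : 1 < #B) (hC : 1 < #C) :
    blockSetoid B = blockSetoid C ↔ B = C := by
  rw [le_antisymm_iff, blockSetoid_le_blockSetoid_iff hB, blockSetoid_le_blockSetoid_iff hC,
    ← subset_antisymm_iff]

theorem blockSetoid_ne_bot_iff {B : Finset α} : blockSetoid B ≠ ⊥ ↔ 1 < #B := by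
  rw [Ne, blockSetoid, Setoid.ker_eq_bot_iff, ← not_le, card_le_one, not_iff_not]
  refine ⟨fun h x hx y hy => h (by simp [hx, hy]), fun h x y hxy => ?_⟩
  by_cases hx : x ∈ B <;> by_cases hy : y ∈ B
  · exact h x hx y hy
  all_goals simp_all

theorem blockSetoid_ne_top_iff [Fintype α] [Nontrivial α] {B : Finset α} :
    blockSetoid B ≠ ⊤ ↔ B ≠ univ := by
  rw [Ne, Ne, not_iff_not, Setoid.eq_top_iff, eq_univ_iff_forall]
  refine ⟨fun h x => ?_, fun h x y => blockSetoid_rel.mpr (Or.inr ⟨h x, h y⟩)⟩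
  obtain ⟨y, hyx⟩ := exists_ne x
  rcases blockSetoid_rel.mp (h x y) with rfl | ⟨hx, _⟩
  exacts [absurd rfl hyx, hx]

end BlockSetoid

theorem IsChain.injOn_card {α : Type*} {𝓑 : Set (Finset α)}
    (h𝓑 : IsChain (· ⊆ ·) 𝓑) : Set.InjOn card 𝓑 := by
  intro B hB C hC hBC
  rcases eq_or_ne B C with rfl | hne
  · rfl
  rcases h𝓑 hB hC hne with hle | hle
  exacts [eq_of_subset_of_card_le hle hBC.ge, (eq_of_subset_of_card_le hle hBC.le).symm]

namespace Equiv.Perm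

variable {n : ℕ}

def initSeg (σ : Perm (Fin n)) (m : ℕ) : Finset (Fin n) :=
  ({i : Fin n | (i : ℕ) < m} : Finset (Fin n)).image σ

theorem mem_initSeg {σ : Perm (Fin n)} {m : ℕ} {x : Fin n} :
    x ∈ σ.initSeg m ↔ (σ⁻¹ x : ℕ) < m := by
  simp only [initSeg, mem_image, mem_filter, mem_univ, true_and]
  exact ⟨by rintro ⟨i, hi, rfl⟩; simpa using hi, fun hx => ⟨σ⁻¹ x, hx, by simp⟩⟩

theorem card_initSeg (σ : Perm (Fin n)) {m : ℕ} (hm : m ≤ n) : #(σ.initSeg m) = m := by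
  rw [initSeg, card_image_of_injective _ σ.injective, Fin.card_filter_val_lt, min_eq_right hm]

theorem initSeg_mono (σ : Perm (Fin n)) : Monotone σ.initSeg :=
  fun _ _ hkl _ hx => mem_initSeg.mpr ((mem_initSeg.mp hx).trans_le hkl)

theorem initSeg_one [NeZero n] (σ : Perm (Fin n)) : σ.initSeg 1 = {σ 0} := by
  ext x
  rw [mem_initSeg, mem_singleton, Nat.lt_one_iff, Fin.val_eq_zero_iff, inv_eq_iff_eq]

theorem initSeg_self (σ : Perm (Fin n)) : σ.initSeg n = univ :=
  eq_univ_of_forall fun x => mem_initSeg.mpr (σ⁻¹ x).isLt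

theorem mul_initSeg (g σ : Perm (Fin n)) (m : ℕ) :
    (g * σ).initSeg m = (σ.initSeg m).image g := by
  rw [initSeg, initSeg, image_image, coe_mul]

theorem eq_of_initSeg_eq {σ τ : Perm (Fin n)}
    (h : ∀ m < n, σ.initSeg (m + 1) = τ.initSeg (m + 1)) : σ = τ := by
  have hle : ∀ {σ τ : Perm (Fin n)}, (∀ m < n, σ.initSeg (m + 1) = τ.initSeg (m + 1)) →
      ∀ x, (σ⁻¹ x : ℕ) ≤ τ⁻¹ x := fun {σ τ} h x => by
    have hx : x ∈ τ.initSeg ((τ⁻¹ x : ℕ) + 1) := mem_initSeg.mpr (Nat.lt_succ_self _)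
    rw [← h _ (τ⁻¹ x).isLt] at hx
    exact Nat.lt_succ_iff.mp (mem_initSeg.mp hx)
  refine inv_injective (Equiv.ext fun x => Fin.ext (le_antisymm (hle h x) (hle ?_ x)))
  exact fun m hm => (h m hm).symm

theorem exists_initSeg_eq (D : ℕ → Finset (Fin n)) (hcard : ∀ m ≤ n, #(D m) = m)
    (hmono : ∀ k l, k ≤ l → l ≤ n → D k ⊆ D l) :
    ∃ σ : Perm (Fin n), ∀ m ≤ n, σ.initSeg m = D m := by
  have hstep : ∀ i : Fin n, ∃ x, D (i + 1) \ D i = {x} := fun i => by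
    rw [← card_eq_one, card_sdiff_of_subset (hmono _ _ (Nat.le_succ _) i.isLt),
      hcard _ i.isLt, hcard _ i.isLt.le]
    omega
  choose f hf using hstep
  have hfmem : ∀ i : Fin n, f i ∈ D (i + 1) ∧ f i ∉ D i := fun i =>
    mem_sdiff.mp ((hf i).symm ▸ mem_singleton_self (f i))
  have hf_lt : ∀ {i j : Fin n}, i < j → f i ≠ f j := fun {i j} hij hfij =>
    (hfmem j).2 (hfij ▸ hmono _ _ hij j.isLt.le (hfmem i).1)
  have hfinj : Function.Injective f := fun i j hij => by
    by_contra hne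
    rcases lt_or_gt_of_ne hne with hlt | hlt
    exacts [hf_lt hlt hij, hf_lt hlt hij.symm]
  refine ⟨Equiv.ofBijective f (Finite.injective_iff_bijective.mp hfinj), fun m hm => ?_⟩
  refine eq_of_subset_of_card_le ?_ ((hcard m hm).trans (card_initSeg _ hm).symm).le
  simp only [initSeg, image_subset_iff, mem_filter, mem_univ, true_and]
  exact fun i hi => hmono _ _ hi hm (hfmem i).1

theorem exists_initSeg_of_isChain {𝓑 : Finset (Finset (Fin n))}
    (h𝓑 : IsChain (· ⊆ ·) (𝓑 : Set (Finset (Fin n)))) (hcard : #𝓑 = n + 1) :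
    ∃ σ : Perm (Fin n), ∀ B ∈ 𝓑, σ.initSeg #B = B := by
  have himage : 𝓑.image card = range (n + 1) := by
    refine eq_of_subset_of_card_le (fun m hm => ?_) ?_
    · obtain ⟨B, -, rfl⟩ := mem_image.mp hm
      exact mem_range_succ_iff.mpr (card_le_univ B |>.trans_eq (Fintype.card_fin n))
    · rw [card_image_of_injOn h𝓑.injOn_card, hcard, card_range]
  have hex : ∀ m, ∃ B, m ≤ n → B ∈ 𝓑 ∧ #B = m := fun m => by
    by_cases hm : m ≤ n
    · obtain ⟨B, hB, hBm⟩ := mem_image.mp (himage ▸ mem_range_succ_iff.mpr hm)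
      exact ⟨B, fun _ => ⟨hB, hBm⟩⟩
    · exact ⟨∅, fun h => absurd h hm⟩
  choose D hD using hex
  have hmono : ∀ k l, k ≤ l → l ≤ n → D k ⊆ D l := fun k l hkl hl => by
    obtain ⟨hk𝓑, hk⟩ := hD k (hkl.trans hl)
    obtain ⟨hl𝓑, hl'⟩ := hD l hl
    rcases eq_or_ne (D k) (D l) with heq | hne
    · exact heq.le
    refine (h𝓑 hk𝓑 hl𝓑 hne).resolve_right fun hsub => hne ?_
    exact (eq_of_subset_of_card_le hsub (by omega)).symm
  obtain ⟨σ, hσ⟩ := exists_initSeg_eq D (fun m hm => (hD m hm).2) hmono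
  refine ⟨σ, fun B hB => ?_⟩
  have hBn : #B ≤ n := card_le_univ B |>.trans_eq (Fintype.card_fin n)
  rw [hσ _ hBn]
  exact h𝓑.injOn_card (hD _ hBn).1 hB (hD _ hBn).2

end Equiv.Perm

section ZeroBlock

open Equiv

variable {n : ℕ} [NeZero n]

open Classical in
noncomputable def zeroBlock (s : BarPi n) : Finset (Fin n) :=
  {x | s.1 x 0}

theorem mem_zeroBlock {s : BarPi n} {x : Fin n} : x ∈ zeroBlock s ↔ s.1 x 0 := by
  simp [zeroBlock]

theorem zero_mem_zeroBlock (s : BarPi n) : 0 ∈ zeroBlock s :=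
  mem_zeroBlock.mpr (s.1.refl 0)

theorem zeroBlock_mono : Monotone (zeroBlock (n := n)) :=
  fun _ _ hst _ hx => mem_zeroBlock.mpr (hst (mem_zeroBlock.mp hx))

theorem eq_blockSetoid_zeroBlock {s : BarPi n} (hs : s ∈ blockSet n) :
    s.1 = blockSetoid (zeroBlock s) := by
  ext x y
  rw [blockSetoid_rel, mem_zeroBlock, mem_zeroBlock]
  refine ⟨fun hxy => ?_, ?_⟩
  · rcases hs x y hxy with hx | rfl
    exacts [Or.inr ⟨hx, s.1.trans (s.1.symm hxy) hx⟩, Or.inl rfl]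
  · rintro (rfl | ⟨hx, hy⟩)
    exacts [s.1.refl x, s.1.trans hx (s.1.symm hy)]

theorem blockSetoid_mem_blockSet {s : BarPi n} {B : Finset (Fin n)} (h0 : 0 ∈ B)
    (hs : s.1 = blockSetoid B) : s ∈ blockSet n := by
  intro x y hxy
  rw [hs, blockSetoid_rel] at hxy ⊢
  rcases hxy with rfl | ⟨hx, -⟩
  exacts [Or.inr rfl, Or.inl (Or.inr ⟨hx, h0⟩)]

theorem zeroBlock_injOn : Set.InjOn (zeroBlock (n := n)) (blockSet n) := fun s hs t ht hst =>
  Subtype.ext (by rw [eq_blockSetoid_zeroBlock hs, eq_blockSetoid_zeroBlock ht, hst])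

theorem card_zeroBlock_mem_Icc {s : BarPi n} (hs : s ∈ blockSet n) :
    #(zeroBlock s) ∈ Icc 2 (n - 1) := by
  have hbot : 1 < #(zeroBlock s) :=
    blockSetoid_ne_bot_iff.mp (eq_blockSetoid_zeroBlock hs ▸ s.2.1)
  have : Nontrivial (Fin n) :=
    Fintype.one_lt_card_iff_nontrivial.mp (hbot.trans_le (card_le_univ _))
  have htop : zeroBlock s ≠ univ :=
    blockSetoid_ne_top_iff.mp (eq_blockSetoid_zeroBlock hs ▸ s.2.2)
  have hlt := card_lt_card (ssubset_univ_iff.mpr htop)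
  rw [card_univ, Fintype.card_fin] at hlt
  exact mem_Icc.mpr ⟨hbot, by omega⟩

noncomputable def zeroFlag (c : FacePoset n) : Finset (Finset (Fin n)) :=
  insert ∅ (insert {0} (insert univ (c.1.image zeroBlock)))

theorem isChain_zeroFlag (c : FacePoset n) :
    IsChain (· ⊆ ·) (zeroFlag c : Set (Finset (Fin n))) := by
  have hblocks : IsChain (· ⊆ ·) (c.1.image zeroBlock : Set (Finset (Fin n))) := by
    rw [coe_image]
    exact c.2.2.image_of_map_rel _ _ _ fun _ _ => (zeroBlock_mono ·)
  simp only [zeroFlag, coe_insert]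
  refine ((hblocks.insert fun _ _ _ => Or.inr (subset_univ _)).insert fun B hB _ => ?_).insert
    fun _ _ _ => Or.inl (empty_subset _)
  refine Or.inl (singleton_subset_iff.mpr ?_)
  rcases hB with rfl | hB
  · exact mem_univ 0
  · obtain ⟨s, -, rfl⟩ := mem_image.mp hB
    exact zero_mem_zeroBlock s

theorem card_zeroFlag (hn : 3 ≤ n) {c : FacePoset n} (hc : c ∈ Cn n) :
    #(zeroFlag c) = n + 1 := by
  obtain ⟨hsub, hcard⟩ := hc
  have hnot : ∀ {B}, #B ∉ Icc 2 (n - 1) → B ∉ c.1.image zeroBlock := fun hB h => by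
    obtain ⟨s, hs, rfl⟩ := mem_image.mp h
    exact hB (card_zeroBlock_mem_Icc (hsub hs))
  have hblocks : #(c.1.image zeroBlock) = n - 2 := by
    rw [card_image_of_injOn (zeroBlock_injOn.mono fun s hs => hsub hs), hcard]
  rw [zeroFlag, card_insert_of_notMem, card_insert_of_notMem, card_insert_of_notMem, hblocks]
  · omega
  · exact hnot (by simp; omega)
  · rw [mem_insert, not_or]
    exact ⟨ne_of_apply_ne card (by simp; omega), hnot (by simp)⟩
  · simp only [mem_insert, not_or]
    exact ⟨ne_of_apply_ne card (by simp), ne_of_apply_ne card (by simp; omega), hnot (by simp)⟩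

end ZeroBlock

section PermChain

open Equiv

variable {n : ℕ}

theorem perm_smul_blockSetoid (g : Perm (Fin n)) (B : Finset (Fin n)) :
    g • blockSetoid B = blockSetoid (B.image g) := by
  have hmem : ∀ z, z ∈ B.image g ↔ g⁻¹ z ∈ B := fun z =>
    ⟨fun hz => by obtain ⟨a, ha, rfl⟩ := mem_image.mp hz; simpa using ha,
      fun h => mem_image.mpr ⟨_, h, by simp⟩⟩
  ext x y
  rw [perm_smul_setoid_rel, blockSetoid_rel, blockSetoid_rel, hmem, hmem, (g⁻¹).injective.eq_iff]

def initSegPartition (σ : Perm (Fin n)) (m : ℕ) (hm : m ∈ Icc 2 (n - 1)) : BarPi n :=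
  have hm' := mem_Icc.mp hm
  have : Nontrivial (Fin n) := Fin.nontrivial_iff_two_le.mpr (by omega)
  have hcard := σ.card_initSeg (m := m) (by omega)
  ⟨blockSetoid (σ.initSeg m), blockSetoid_ne_bot_iff.mpr (by omega),
    blockSetoid_ne_top_iff.mpr fun h => by
      rw [h, card_univ, Fintype.card_fin] at hcard
      omega⟩

theorem initSegPartition_eq_iff {σ τ : Perm (Fin n)} {k l : ℕ} {hk : k ∈ Icc 2 (n - 1)}
    {hl : l ∈ Icc 2 (n - 1)} :
    initSegPartition σ k hk = initSegPartition τ l hl ↔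
      k = l ∧ σ.initSeg k = τ.initSeg l := by
  have hk' := mem_Icc.mp hk
  have hl' := mem_Icc.mp hl
  have hσ := σ.card_initSeg (m := k) (by omega)
  have hτ := τ.card_initSeg (m := l) (by omega)
  constructor
  · intro h
    have hB : σ.initSeg k = τ.initSeg l :=
      (blockSetoid_inj (by omega) (by omega)).mp (congrArg Subtype.val h)
    exact ⟨by rw [← hσ, ← hτ, hB], hB⟩
  · rintro ⟨-, h⟩
    exact Subtype.ext (congrArg blockSetoid h)

noncomputable def permChain (hn : 3 ≤ n) (σ : Perm (Fin n)) : FacePoset n :=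
  ⟨(Icc 2 (n - 1)).attach.image fun m => initSegPartition σ m.1 m.2,
    ⟨_, mem_image_of_mem _ (mem_attach _ ⟨2, mem_Icc.mpr ⟨le_rfl, by omega⟩⟩)⟩, by
    simp only [coe_image]
    rintro _ ⟨⟨k, hk⟩, -, rfl⟩ _ ⟨⟨l, hl⟩, -, rfl⟩ -
    have h2 : ∀ {m} (hm : m ∈ Icc 2 (n - 1)), 1 < #(σ.initSeg m) := fun hm => by
      rw [σ.card_initSeg (by have := mem_Icc.mp hm; omega)]
      exact (mem_Icc.mp hm).1
    rcases le_total k l with hkl | hkl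
    · exact Or.inl ((blockSetoid_le_blockSetoid_iff (h2 hk)).mpr (σ.initSeg_mono hkl))
    · exact Or.inr ((blockSetoid_le_blockSetoid_iff (h2 hl)).mpr (σ.initSeg_mono hkl))⟩

variable (hn : 3 ≤ n)

theorem mem_permChain {σ : Perm (Fin n)} {s : BarPi n} :
    s ∈ (permChain hn σ).1 ↔ ∃ m hm, initSegPartition σ m hm = s := by
  simp [permChain]

theorem card_permChain (σ : Perm (Fin n)) : #(permChain hn σ).1 = n - 2 := by
  rw [permChain, card_image_of_injective, card_attach, Nat.card_Icc]
  · omega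
  · exact fun k l hkl => Subtype.ext (initSegPartition_eq_iff.mp hkl).1

theorem smul_permChain (g σ : Perm (Fin n)) : g • permChain hn σ = permChain hn (g * σ) := by
  refine Subtype.ext (?_ : (permChain hn σ).1.image (g • ·) = _)
  rw [permChain, permChain, image_image]
  congr 1
  funext m
  refine Subtype.ext (?_ : g • blockSetoid _ = blockSetoid _)
  rw [perm_smul_blockSetoid, Perm.mul_initSeg]

variable [NeZero n]

theorem mem_S1Sn {σ : Perm (Fin n)} : σ ∈ S1Sn n ↔ σ 0 = 0 :=
  MulAction.mem_stabilizer_iff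

theorem permChain_injOn : Set.InjOn (permChain hn) {σ | σ 0 = 0} := by
  intro σ (hσ : σ 0 = 0) τ (hτ : τ 0 = 0) hστ
  have hmid : ∀ m (hm : m ∈ Icc 2 (n - 1)), σ.initSeg m = τ.initSeg m := fun m hm => by
    have hs : initSegPartition σ m hm ∈ (permChain hn τ).1 := by
      rw [← hστ]
      exact (mem_permChain hn).mpr ⟨m, hm, rfl⟩
    obtain ⟨l, hl, heq⟩ := (mem_permChain hn).mp hs
    obtain ⟨rfl, h⟩ := initSegPartition_eq_iff.mp heq
    exact h.symm
  refine Perm.eq_of_initSeg_eq fun m hm => ?_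
  rcases Nat.eq_zero_or_pos m with rfl | hm0
  · rw [Perm.initSeg_one, Perm.initSeg_one, hσ, hτ]
  rcases Nat.lt_or_ge (m + 1) n with hmn | hmn
  · exact hmid _ (mem_Icc.mpr ⟨by omega, by omega⟩)
  · rw [show m + 1 = n by omega, Perm.initSeg_self, Perm.initSeg_self]

theorem permChain_mem_Cn {σ : Perm (Fin n)} (h0 : σ 0 = 0) : permChain hn σ ∈ Cn n := by
  refine ⟨fun s hs => ?_, card_permChain hn σ⟩
  obtain ⟨m, hm, rfl⟩ := (mem_permChain hn).mp hs
  refine blockSetoid_mem_blockSet (Perm.mem_initSeg.mpr ?_) rfl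
  rw [← h0, Perm.coe_inv, symm_apply_apply, Fin.val_zero]
  have := (mem_Icc.mp hm).1
  omega

theorem exists_permChain_eq {c : FacePoset n} (hc : c ∈ Cn n) :
    ∃ σ : Perm (Fin n), σ 0 = 0 ∧ permChain hn σ = c := by
  obtain ⟨σ, hσ⟩ := Perm.exists_initSeg_of_isChain (isChain_zeroFlag c) (card_zeroFlag hn hc)
  have h0 : σ 0 = 0 := by
    simpa [Perm.initSeg_one] using hσ ({0} : Finset (Fin n)) (by simp [zeroFlag])
  refine ⟨σ, h0, Subtype.ext (eq_of_subset_of_card_le (fun s hs => ?_) ?_).symm⟩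
  · have hs' := hc.1 hs
    refine (mem_permChain hn).mpr ⟨_, card_zeroBlock_mem_Icc hs', Subtype.ext ?_⟩
    show blockSetoid (σ.initSeg _) = s.1
    rw [hσ _ (by simp [zeroFlag, mem_image_of_mem zeroBlock hs]), ← eq_blockSetoid_zeroBlock hs']
  · rw [card_permChain, hc.2]

theorem range_permChain : Set.range (fun σ : S1Sn n => permChain hn σ) = Cn n := by
  ext c
  constructor
  · rintro ⟨σ, rfl⟩
    exact permChain_mem_Cn hn (mem_S1Sn.mp σ.2)
  · intro hc
    obtain ⟨σ, h0, rfl⟩ := exists_permChain_eq hn hc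
    exact ⟨⟨σ, mem_S1Sn.mpr h0⟩, rfl⟩

end PermChain

/-- For `n ≥ 3` and any subgroup `G` of `S_1 × S_{n-1}`, the number of `G`-orbits on the
set `C_n` equals the index of `G` in `S_1 × S_{n-1}`. -/
theorem card_orbits_Cn_eq_index (n : ℕ) [NeZero n] (hn : 3 ≤ n) (G : Subgroup (S1Sn n)) :
    {S : Set (FacePoset n) | ∃ σ ∈ Cn n, S = MulAction.orbit G σ}.ncard = G.index := by
  rw [← range_permChain hn]
  refine ncard_orbits_eq_index_of_equivariant (fun σ τ h => Subtype.ext ?_) (fun g σ => ?_) G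
  · exact permChain_injOn hn (mem_S1Sn.mp σ.2) (mem_S1Sn.mp τ.2) h
  · exact (smul_permChain hn g σ).symm
end
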